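/- arXiv:2411.11522 — 2 statements merged into one kernel-verified Lean document; each statement's English description precedes it below -/
import Mathlib

section
/- Let (D_1,…,D_N,Z) and (D_1',…,D_N',Z') be stochastically increasing Bernoulli mixture models with the same default probabilities π_1,…,π_N ∈ [0,1]. Let δ_1,…,δ_N be independent nonnegative integrable random variables that are also independent of both default models, and let e_1,…,e_N be positive constants. If G_{D_n,Z}(s) ≥ G_{D_n',Z'}(s) for all n ∈ {1,…,N} and all s ∈ [0,1], then Σ_{n=1}^N e_n δ_n D_n ≤_cx Σ_{n=1}^N e_n δ_n D_n'. -/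
open MeasureTheory ProbabilityTheory Set

noncomputable section

variable {Ω : Type*} [MeasurableSpace Ω]

/-- The measure `P` is atomless: every non-null measurable set contains a measurable
subset of strictly smaller positive measure. -/
def MeasureAtomless (P : Measure Ω) : Prop :=
  ∀ s : Set Ω, MeasurableSet s → P s ≠ 0 →
    ∃ t ⊆ s, MeasurableSet t ∧ 0 < P t ∧ P t < P s

/-- Distribution function `F_Z` of a real random variable `Z` under `P`. -/
def distFun (P : Measure Ω) (Z : Ω → ℝ) (z : ℝ) : ℝ :=
  (P {ω | Z ω ≤ z}).toReal

/-- Generalized inverse `F⁻¹(t) = inf {x | t ≤ F x}`. -/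
def qinv (F : ℝ → ℝ) (t : ℝ) : ℝ :=
  sInf {x : ℝ | t ≤ F x}

/-- Bernoulli mixture model `(D₁,…,D_N, Z)` with default probabilities `π` and
(fixed versions of) conditional default probability functions `p n`:
each `Dₙ` is `{0,1}`-valued with `P(Dₙ = 1) = πₙ`, `pₙ` is a version of the conditional
probability `P(Dₙ = 1 | Z = ·)`, and `D₁,…,D_N` are conditionally independent given `Z`. -/
structure IsBMM (P : Measure Ω) {N : ℕ} (D : Fin N → Ω → ℝ) (Z : Ω → ℝ)
    (π : Fin N → ℝ) (p : Fin N → ℝ → ℝ) : Prop where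
  measD : ∀ n, Measurable (D n)
  measZ : Measurable Z
  measp : ∀ n, Measurable (p n)
  values : ∀ n ω, D n ω = 0 ∨ D n ω = 1
  pi_mem : ∀ n, π n ∈ Icc (0:ℝ) 1
  prob : ∀ n, P {ω | D n ω = 1} = ENNReal.ofReal (π n)
  p_mem : ∀ n z, p n z ∈ Icc (0:ℝ) 1
  condVersion : ∀ n (B : Set ℝ), MeasurableSet B →
    P ({ω | D n ω = 1} ∩ Z ⁻¹' B) = ENNReal.ofReal (∫ z in B, p n z ∂(P.map Z))
  condIndep : ∀ (d : Fin N → Bool) (B : Set ℝ), MeasurableSet B →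
    P ((⋂ n, {ω | D n ω = (if d n then (1:ℝ) else 0)}) ∩ Z ⁻¹' B)
      = ENNReal.ofReal (∫ z in B, ∏ n, (if d n then p n z else 1 - p n z) ∂(P.map Z))

/-- Stochastically increasing Bernoulli mixture model: a BMM in which every
conditional default probability function `pₙ` is increasing. -/
structure IsSIBMM (P : Measure Ω) {N : ℕ} (D : Fin N → Ω → ℝ) (Z : Ω → ℝ)
    (π : Fin N → ℝ) (p : Fin N → ℝ → ℝ) extends IsBMM P D Z π p : Prop where
  mono : ∀ n, Monotone (p n)

/-- The default integral function `G_{D,Z}(s) = ∫_0^s p(F_Z^{-1}(t)) dt`. -/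
def defaultIntegral (P : Measure Ω) (Z : Ω → ℝ) (p : ℝ → ℝ) (s : ℝ) : ℝ :=
  ∫ t in (0:ℝ)..s, p (qinv (distFun P Z) t)

/-- Convex order of (nonnegative, integrable) random variables: `E[φ(X)] ≤ E[φ(Y)]`
for every convex `φ : [0,∞) → ℝ` such that both expectations exist. -/
def ConvexOrder (P : Measure Ω) (X Y : Ω → ℝ) : Prop :=
  ∀ φ : ℝ → ℝ, ConvexOn ℝ (Ici (0:ℝ)) φ →
    Integrable (fun ω => φ (X ω)) P → Integrable (fun ω => φ (Y ω)) P →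
    ∫ ω, φ (X ω) ∂P ≤ ∫ ω, φ (Y ω) ∂P

/-- `X₁,…,X_N` are conditionally independent given `Y`: there are (versions of the)
conditional distribution functions `qₙ(x, ·)` of `Xₙ` given `Y` whose product is a version
of the conditional joint distribution function. -/
def CondIndepGiven (P : Measure Ω) {N : ℕ} (X : Fin N → Ω → ℝ) (Y : Ω → ℝ) : Prop :=
  ∃ q : Fin N → ℝ → ℝ → ℝ,
    (∀ n x, Measurable (q n x)) ∧
    (∀ n x y, q n x y ∈ Icc (0:ℝ) 1) ∧
    (∀ n (x : ℝ) (B : Set ℝ), MeasurableSet B →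
      P ({ω | X n ω ≤ x} ∩ Y ⁻¹' B) = ENNReal.ofReal (∫ y in B, q n x y ∂(P.map Y))) ∧
    (∀ (x : Fin N → ℝ) (B : Set ℝ), MeasurableSet B →
      P ((⋂ n, {ω | X n ω ≤ x n}) ∩ Y ⁻¹' B)
        = ENNReal.ofReal (∫ y in B, ∏ n, q n (x n) y ∂(P.map Y)))

/-- Bivariate copula: 2-increasing with the usual boundary conditions. -/
def IsCopula (C : ℝ → ℝ → ℝ) : Prop :=
  (∀ u ∈ Icc (0:ℝ) 1, C u 0 = 0 ∧ C u 1 = u) ∧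
  (∀ v ∈ Icc (0:ℝ) 1, C 0 v = 0 ∧ C 1 v = v) ∧
  (∀ u₁ u₂ v₁ v₂ : ℝ, u₁ ∈ Icc (0:ℝ) 1 → u₂ ∈ Icc (0:ℝ) 1 →
    v₁ ∈ Icc (0:ℝ) 1 → v₂ ∈ Icc (0:ℝ) 1 → u₁ ≤ u₂ → v₁ ≤ v₂ →
    0 ≤ C u₂ v₂ - C u₁ v₂ - C u₂ v₁ + C u₁ v₁)

/-- A copula is stochastically increasing (SI) iff `v ↦ C(u,v)` is concave for every `u`. -/
def IsSI (C : ℝ → ℝ → ℝ) : Prop :=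
  ∀ u ∈ Icc (0:ℝ) 1, ConcaveOn ℝ (Icc (0:ℝ) 1) (fun v => C u v)

/-- Partial derivative `∂₂C(u,v)` of a copula w.r.t. its second argument
(the conditional distribution function `C(u|v)`). -/
def copDeriv₂ (C : ℝ → ℝ → ℝ) (u v : ℝ) : ℝ := deriv (fun w => C u w) v

/-- Generalized inverse `C^{-1}(t|v) = inf {u ∈ [0,1] | ∂₂C(u,v) ≥ t}`. -/
def condInv (C : ℝ → ℝ → ℝ) (t v : ℝ) : ℝ :=
  sInf {u : ℝ | u ∈ Icc (0:ℝ) 1 ∧ t ≤ copDeriv₂ C u v}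

/-- Survival copula `Ĉ(u,v) = u + v − 1 + C(1−u, 1−v)`. -/
def survCop (C : ℝ → ℝ → ℝ) (u v : ℝ) : ℝ :=
  u + v - 1 + C (1 - u) (1 - v)

/-- `U` is uniformly distributed on `(0,1)` under `P`. -/
def IsUniform01 (P : Measure Ω) (U : Ω → ℝ) : Prop :=
  ∀ x ∈ Icc (0:ℝ) 1, P {ω | U ω ≤ x} = ENNReal.ofReal x

/-- The Clayton copula with parameter `θ > 0`. -/
def clayton (θ : ℝ) (u v : ℝ) : ℝ :=
  if u = 0 ∨ v = 0 then 0
  else (u ^ (-θ) + v ^ (-θ) - 1) ^ (-1 / θ)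

/-- `g` is the increasing rearrangement of `f` on `(0,1)`. -/
def IsIncreasingRearrangement (f g : ℝ → ℝ) : Prop :=
  MonotoneOn g (Ioo (0:ℝ) 1) ∧
  (∀ x ∈ Ioo (0:ℝ) 1, (∫ t in x..(1:ℝ), f t) ≤ ∫ t in x..(1:ℝ), g t) ∧
  (∫ t in (0:ℝ)..(1:ℝ), f t) = ∫ t in (0:ℝ)..(1:ℝ), g t

end

/-!
Truncating the exposures at level `j` and letting `j → ∞` (dominated convergence, with an affine
minorant of `φ`) reduces the theorem to bounded exposures. Conditioning on the default pattern,
which is independent of the exposures, and substituting `z = F_Z⁻¹(t)` gives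
`E φ(L) = ∫₀¹ E[c(B(t))] dt`, where `B(t)` is a vector of independent Bernoulli variables with
increasing parameters `pₙ(F_Z⁻¹(t))` and `c(u) = E φ(∑_{n ∈ u} eₙ δₙ)` has increasing increments
by convexity of `φ`. Exchanging the parameters of the two models one name at a time changes the
integral by `∫₀¹ (p'ₙ(F_{Z'}⁻¹ t) - pₙ(F_Z⁻¹ t)) B(t) dt` with `B` increasing, and this is
nonnegative because `G_{Dₙ,Z} ≥ G_{D'ₙ,Z'}` with equal totals `πₙ`.
-/

open Filter Topology

namespace ConvexOn

variable {S : Set ℝ} {f : ℝ → ℝ}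

theorem exists_affine_le (hf : ConvexOn ℝ S f) {x : ℝ} (hx : x ∈ interior S) :
    ∃ g : ℝ, ∀ y ∈ S, f x + g * (y - x) ≤ f y := by
  refine ⟨derivWithin f (Ioi x) x, fun y hy => ?_⟩
  rcases lt_trichotomy y x with hyx | rfl | hxy
  · have h := (hf.slope_le_leftDeriv_of_mem_interior hy hx hyx).trans
      (hf.leftDeriv_le_rightDeriv_of_mem_interior hx)
    rw [slope_def_field, div_le_iff₀ (sub_pos.mpr hyx)] at h
    linarith
  · simp
  · have h := hf.rightDeriv_le_slope_of_mem_interior hx hy hxy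
    rw [slope_def_field, le_div_iff₀ (sub_pos.mpr hxy)] at h
    linarith

theorem map_add_sub_le_map_add_sub (hf : ConvexOn ℝ S f) {s s' d : ℝ} (hs : s ∈ S)
    (hs' : s' + d ∈ S) (hss' : s ≤ s') (hd : 0 ≤ d) : f (s + d) - f s ≤ f (s' + d) - f s' := by
  rcases hd.eq_or_lt with rfl | hd
  · simp
  have mem : ∀ {y}, s ≤ y → y ≤ s' + d → y ∈ S := fun h1 h2 => hf.1.ordConnected.out hs hs' ⟨h1, h2⟩
  have h1 := hf.secant_mono hs (mem (by linarith) (by linarith)) hs'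
    (x := s + d) (by linarith) (by linarith) (by linarith)
  have h2 := hf.secant_mono hs' hs (mem hss' (by linarith)) (x := s) (y := s')
    (by linarith) (by linarith) hss'
  have e1 : (f s - f (s' + d)) / (s - (s' + d)) = (f (s' + d) - f s) / (s' + d - s) := by
    rw [← neg_div_neg_eq]; ring_nf
  have e2 : (f s' - f (s' + d)) / (s' - (s' + d)) = (f (s' + d) - f s') / d := by
    rw [← neg_div_neg_eq]; ring_nf
  rw [e1, e2] at h2
  simp only [add_sub_cancel_left] at h1
  have := h1.trans h2
  rwa [div_le_div_iff_of_pos_right hd] at this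

theorem exists_abs_le_of_mem_Icc (hf : ConvexOn ℝ (Ici 0) f) :
    ∃ K : ℝ, ∀ x y, y ∈ Icc 0 x → |f y| ≤ |f 0| + |f x| + K * (1 + x) := by
  obtain ⟨g, hg⟩ := hf.exists_affine_le (x := 1) (by simp)
  refine ⟨|f 1| + |g|, fun x y ⟨hy, hyx⟩ => abs_le.mpr ⟨?_, ?_⟩⟩
  · have := hg y hy
    nlinarith [abs_nonneg (f 0), abs_nonneg (f x), abs_nonneg g, neg_abs_le (f 1),
      neg_abs_le g, le_abs_self g, abs_nonneg (f 1)]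
  · have := hf.le_on_segment (x := 0) (y := x) (by simp) (hy.trans hyx)
      (by rw [segment_eq_Icc (hy.trans hyx)]; exact ⟨hy, hyx⟩)
    have : max (f 0) (f x) ≤ |f 0| + |f x| :=
      max_le (by linarith [le_abs_self (f 0), abs_nonneg (f x)])
        (by linarith [le_abs_self (f x), abs_nonneg (f 0)])
    nlinarith [abs_nonneg (f 1), abs_nonneg g]

theorem exists_measurable_eqOn (hf : ConvexOn ℝ (Ici 0) f) :
    ∃ g : ℝ → ℝ, Measurable g ∧ EqOn g f (Ici 0) := by
  classical
  refine ⟨(Ioi 0).piecewise f fun _ => f 0, ?_, fun y (hy : 0 ≤ y) => ?_⟩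
  · refine ContinuousOn.measurable_piecewise ?_ continuousOn_const measurableSet_Ioi
    simpa using hf.continuousOn_interior
  · rcases hy.eq_or_lt with rfl | hy
    · simp
    · exact piecewise_eq_of_mem _ _ _ hy

end ConvexOn

section BernoulliExpectation

variable {ι : Type*} [DecidableEq ι]

def bernoulliWeight (s : Finset ι) (q : ι → ℝ) (t : Finset ι) : ℝ :=
  (∏ n ∈ t, q n) * ∏ n ∈ s \ t, (1 - q n)

/-- `bernoulliExp s q γ` is `E[γ {n ∈ s | Bₙ = 1}]` for independent `Bₙ ~ Bernoulli (q n)`. -/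
def bernoulliExp (s : Finset ι) (q : ι → ℝ) (γ : Finset ι → ℝ) : ℝ :=
  ∑ t ∈ s.powerset, γ t * bernoulliWeight s q t

variable {s : Finset ι} {q q' : ι → ℝ} {γ : Finset ι → ℝ}

theorem bernoulliWeight_nonneg (hq : ∀ n ∈ s, q n ∈ Icc (0:ℝ) 1) {t : Finset ι}
    (ht : t ⊆ s) : 0 ≤ bernoulliWeight s q t :=
  mul_nonneg (Finset.prod_nonneg fun n hn => (hq n (ht hn)).1)
    (Finset.prod_nonneg fun n hn => sub_nonneg.mpr (hq n (Finset.mem_sdiff.mp hn).1).2)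

theorem abs_bernoulliWeight_le_one (hq : ∀ n, q n ∈ Icc (0:ℝ) 1) (t : Finset ι) :
    |bernoulliWeight s q t| ≤ 1 := by
  rw [bernoulliWeight, abs_mul, Finset.abs_prod, Finset.abs_prod]
  refine mul_le_one₀ ?_ (Finset.prod_nonneg fun _ _ => abs_nonneg _) ?_ <;>
    refine Finset.prod_le_one (fun _ _ => abs_nonneg _) fun n _ => abs_le.mpr ⟨?_, ?_⟩ <;>
    linarith [(hq n).1, (hq n).2]

theorem bernoulliExp_congr (h : ∀ n ∈ s, q n = q' n) (γ : Finset ι → ℝ) :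
    bernoulliExp s q γ = bernoulliExp s q' γ := by
  refine Finset.sum_congr rfl fun t ht => ?_
  have hts := Finset.mem_powerset.mp ht
  rw [bernoulliWeight, bernoulliWeight,
    Finset.prod_congr rfl fun n hn => h n (hts hn),
    Finset.prod_congr rfl fun n hn => congrArg (1 - ·) (h n (Finset.mem_sdiff.mp hn).1)]

theorem bernoulliExp_sub (s : Finset ι) (q : ι → ℝ) (γ₁ γ₂ : Finset ι → ℝ) :
    bernoulliExp s q (fun t => γ₁ t - γ₂ t) = bernoulliExp s q γ₁ - bernoulliExp s q γ₂ := by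
  simp only [bernoulliExp, sub_mul, Finset.sum_sub_distrib]

theorem bernoulliExp_insert {a : ι} (ha : a ∉ s) (q : ι → ℝ) (γ : Finset ι → ℝ) :
    bernoulliExp (insert a s) q γ
      = (1 - q a) * bernoulliExp s q γ + q a * bernoulliExp s q (fun t => γ (insert a t)) := by
  rw [bernoulliExp, Finset.sum_powerset_insert ha, bernoulliExp, bernoulliExp,
    Finset.mul_sum, Finset.mul_sum]
  congr 1 <;> refine Finset.sum_congr rfl fun t ht => ?_ <;>
    have hat : a ∉ t := fun h => ha (Finset.mem_powerset.mp ht h)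
  · rw [bernoulliWeight, bernoulliWeight, Finset.insert_sdiff_of_notMem _ hat,
      Finset.prod_insert fun h => ha (Finset.mem_sdiff.mp h).1]
    ring
  · rw [bernoulliWeight, bernoulliWeight, Finset.insert_sdiff_insert,
      Finset.sdiff_insert_of_notMem ha, Finset.prod_insert hat]
    ring

theorem bernoulliExp_insert_update {a : ι} (ha : a ∉ s) (q : ι → ℝ) (x : ℝ)
    (γ : Finset ι → ℝ) :
    bernoulliExp (insert a s) (Function.update q a x) γ
      = bernoulliExp s q γ + x * bernoulliExp s q (fun t => γ (insert a t) - γ t) := by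
  have hq : ∀ n ∈ s, Function.update q a x n = q n := fun n hn =>
    Function.update_of_ne (ne_of_mem_of_not_mem hn ha) _ _
  rw [bernoulliExp_insert ha, bernoulliExp_congr hq, bernoulliExp_congr hq,
    Function.update_self, bernoulliExp_sub]
  ring

theorem bernoulliExp_univ_update [Fintype ι] (q : ι → ℝ) (a : ι) (x : ℝ) (γ : Finset ι → ℝ) :
    bernoulliExp Finset.univ (Function.update q a x) γ = bernoulliExp (Finset.univ.erase a) q γ
      + x * bernoulliExp (Finset.univ.erase a) q (fun t => γ (insert a t) - γ t) := by
  rw [← bernoulliExp_insert_update (Finset.notMem_erase a _),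
    Finset.insert_erase (Finset.mem_univ a)]

theorem bernoulliExp_nonneg (hγ : ∀ t ⊆ s, 0 ≤ γ t) (hq : ∀ n ∈ s, q n ∈ Icc (0:ℝ) 1) :
    0 ≤ bernoulliExp s q γ :=
  Finset.sum_nonneg fun t ht => mul_nonneg (hγ t (Finset.mem_powerset.mp ht))
    (bernoulliWeight_nonneg hq (Finset.mem_powerset.mp ht))

theorem abs_bernoulliExp_le (hq : ∀ n, q n ∈ Icc (0:ℝ) 1) :
    |bernoulliExp s q γ| ≤ ∑ t ∈ s.powerset, |γ t| :=
  (Finset.abs_sum_le_sum_abs _ _).trans <| Finset.sum_le_sum fun t _ => by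
    rw [abs_mul]
    exact mul_le_of_le_one_right (abs_nonneg _) (abs_bernoulliWeight_le_one hq t)

theorem bernoulliExp_mono (hγ : ∀ t t', t ⊆ t' → t' ⊆ s → γ t ≤ γ t')
    (hq : ∀ n ∈ s, q n ∈ Icc (0:ℝ) 1) (hq' : ∀ n ∈ s, q' n ∈ Icc (0:ℝ) 1)
    (hqq' : ∀ n ∈ s, q n ≤ q' n) :
    bernoulliExp s q γ ≤ bernoulliExp s q' γ := by
  induction s using Finset.induction_on generalizing γ with
  | empty => simp [bernoulliExp, bernoulliWeight]
  | @insert a s ha ih =>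
    have hs : s ⊆ insert a s := Finset.subset_insert a s
    have hγa : ∀ t t', t ⊆ t' → t' ⊆ s → γ (insert a t) ≤ γ (insert a t') :=
      fun t t' htt' ht's => hγ _ _ (Finset.insert_subset_insert a htt')
        (Finset.insert_subset_insert a ht's)
    have hinc : 0 ≤ bernoulliExp s q' (fun t => γ (insert a t)) - bernoulliExp s q' γ := by
      rw [← bernoulliExp_sub]
      exact bernoulliExp_nonneg (fun t ht => sub_nonneg.mpr <| hγ _ _
        (Finset.subset_insert a t) (Finset.insert_subset_insert a ht))
        fun n hn => hq' n (hs hn)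
    have i1 := ih (fun t t' h h' => hγ t t' h (h'.trans hs))
      (fun n hn => hq n (hs hn)) (fun n hn => hq' n (hs hn)) fun n hn => hqq' n (hs hn)
    have i2 := ih hγa (fun n hn => hq n (hs hn)) (fun n hn => hq' n (hs hn))
      fun n hn => hqq' n (hs hn)
    have hqa := hq a (Finset.mem_insert_self a s)
    have hqa' := hqq' a (Finset.mem_insert_self a s)
    rw [bernoulliExp_insert ha, bernoulliExp_insert ha]
    nlinarith [hqa.1, hqa.2]

end BernoulliExpectation

section Quantile

variable (μ : Measure ℝ)

theorem qinv_cdf_le_iff {t : ℝ} (ht : t ∈ Ioo (0:ℝ) 1) (x : ℝ) :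
    qinv (cdf μ) t ≤ x ↔ t ≤ cdf μ x := by
  have hne : {y | t ≤ cdf μ y}.Nonempty :=
    ((tendsto_cdf_atTop μ).eventually (eventually_ge_nhds ht.2)).exists
  have hbdd : BddBelow {y | t ≤ cdf μ y} := by
    obtain ⟨y₀, hy₀⟩ := ((tendsto_cdf_atBot μ).eventually (eventually_lt_nhds ht.1)).exists
    exact ⟨y₀, fun y hy => le_of_not_gt fun h => (hy.trans ((cdf μ).mono h.le)).not_gt hy₀⟩
  refine ⟨fun h => ?_, fun h => csInf_le hbdd h⟩
  refine le_trans ?_ ((cdf μ).mono h)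
  -- by right continuity of the cdf, the infimum belongs to the set
  refine ge_of_tendsto (((cdf μ).right_continuous _).tendsto.mono_left
    (nhdsWithin_mono _ Ioi_subset_Ici_self)) (eventually_nhdsWithin_of_forall fun y hy => ?_)
  obtain ⟨z, hz, hzy⟩ := (csInf_lt_iff hbdd hne).mp hy
  exact hz.trans ((cdf μ).mono hzy.le)

theorem monotoneOn_qinv_cdf : MonotoneOn (qinv (cdf μ)) (Ioo (0:ℝ) 1) := fun _ ht _ ht' htt' =>
  (qinv_cdf_le_iff μ ht _).mpr <| htt'.trans <| (qinv_cdf_le_iff μ ht' _).mp le_rfl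

/-- The quantile function of `μ`, set to `0` off `(0, 1)` where `qinv` takes junk values. -/
noncomputable def quantile (t : ℝ) : ℝ := if t ∈ Ioo (0:ℝ) 1 then qinv (cdf μ) t else 0

theorem quantile_of_mem {t : ℝ} (ht : t ∈ Ioo (0:ℝ) 1) : quantile μ t = qinv (cdf μ) t :=
  if_pos ht

theorem measurable_quantile : Measurable (quantile μ) := by
  refine measurable_of_restrict_of_restrict_compl (s := Ioo (0:ℝ) 1) measurableSet_Ioo ?_ ?_
  · refine Monotone.measurable fun a b hab => ?_
    simp only [domRestrict_apply, quantile_of_mem μ a.2, quantile_of_mem μ b.2]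
    exact monotoneOn_qinv_cdf μ a.2 b.2 hab
  · have : (Ioo (0:ℝ) 1)ᶜ.domRestrict (quantile μ) = fun _ => 0 :=
      funext fun t => if_neg t.2
    rw [this]
    exact measurable_const

theorem map_quantile [IsProbabilityMeasure μ] :
    (volume.restrict (Ioo (0:ℝ) 1)).map (quantile μ) = μ := by
  have hQ := measurable_quantile μ
  have : IsProbabilityMeasure (volume.restrict (Ioo (0:ℝ) 1)) := ⟨by simp⟩
  have := Measure.isProbabilityMeasure_map (μ := volume.restrict (Ioo (0:ℝ) 1)) hQ.aemeasurable
  refine Measure.ext_of_Iic _ _ fun x => ?_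
  have hset : quantile μ ⁻¹' Iic x ∩ Ioo 0 1 = Ioc 0 (cdf μ x) ∩ Ioo 0 1 := by
    ext t
    simp only [mem_inter_iff, mem_preimage, mem_Iic, mem_Ioc]
    constructor
    · rintro ⟨h, ht⟩
      exact ⟨⟨ht.1, (qinv_cdf_le_iff μ ht x).mp (quantile_of_mem μ ht ▸ h)⟩, ht⟩
    · rintro ⟨⟨-, h⟩, ht⟩
      exact ⟨quantile_of_mem μ ht ▸ (qinv_cdf_le_iff μ ht x).mpr h, ht⟩
  rw [Measure.map_apply hQ measurableSet_Iic, Measure.restrict_apply (hQ measurableSet_Iic), hset,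
    ← ofReal_cdf]
  have hc := cdf_le_one μ x
  refine le_antisymm ((measure_mono inter_subset_left).trans (by simp)) ?_
  calc ENNReal.ofReal (cdf μ x) = volume (Ioo 0 (cdf μ x)) := by simp
    _ ≤ _ := measure_mono (fun t ht => ⟨Ioo_subset_Ioc_self ht, ht.1, ht.2.trans_le hc⟩ :
        Ioo 0 (cdf μ x) ⊆ Ioc 0 (cdf μ x) ∩ Ioo 0 1)

theorem integral_eq_setIntegral_quantile [IsProbabilityMeasure μ] {h : ℝ → ℝ}
    (hh : AEStronglyMeasurable h μ) :
    ∫ z, h z ∂μ = ∫ t in Ioo (0:ℝ) 1, h (quantile μ t) := by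
  have hh' : AEStronglyMeasurable h ((volume.restrict (Ioo (0:ℝ) 1)).map (quantile μ)) := by
    rwa [map_quantile]
  calc ∫ z, h z ∂μ = ∫ z, h z ∂((volume.restrict (Ioo (0:ℝ) 1)).map (quantile μ)) := by
        rw [map_quantile]
    _ = _ := integral_map (measurable_quantile μ).aemeasurable hh'

end Quantile

theorem MonotoneOn.exists_sublevel_ae_eq_Ioo {B : ℝ → ℝ} (hB : MonotoneOn B (Ioo (0:ℝ) 1))
    (u : ℝ) : ∃ s ∈ Icc (0:ℝ) 1, ({t | B t ≤ u} ∩ Ioo 0 1 : Set ℝ) =ᵐ[volume] Ioo 0 s := by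
  set A : Set ℝ := {t | B t ≤ u} ∩ Ioo 0 1
  have hbdd : BddAbove (insert 0 A) := ⟨1, by rintro x (rfl | hx) <;> [norm_num; exact hx.2.2.le]⟩
  have hsub : Ioo 0 (sSup (insert 0 A)) ⊆ A := fun t ht => by
    obtain ⟨x, hx, htx⟩ := exists_lt_of_lt_csSup (insert_nonempty 0 A) ht.2
    rcases hx with rfl | hx
    · exact absurd ht.1 htx.not_gt
    exact ⟨(hB ⟨ht.1, htx.trans hx.2.2⟩ hx.2 htx.le).trans hx.1, ht.1, htx.trans hx.2.2⟩
  refine ⟨sSup (insert 0 A), ⟨le_csSup hbdd (mem_insert 0 A),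
    csSup_le (insert_nonempty 0 A) (by rintro x (rfl | hx) <;> [norm_num; exact hx.2.2.le])⟩,
    (ae_eq_of_subset_of_measure_ge hsub ?_ measurableSet_Ioo.nullMeasurableSet ?_).symm⟩
  · calc volume A ≤ volume (Ioc 0 (sSup (insert 0 A))) :=
          measure_mono fun t ht => ⟨ht.2.1, le_csSup hbdd (mem_insert_of_mem 0 ht)⟩
      _ = volume (Ioo 0 (sSup (insert 0 A))) := by simp
  · exact ((measure_mono inter_subset_right).trans_lt measure_Ioo_lt_top).ne

theorem setIntegral_mul_nonneg_of_monotoneOn {B h : ℝ → ℝ} {M : ℝ}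
    (hB : MonotoneOn B (Ioo (0:ℝ) 1)) (hBm : Measurable B)
    (hBM : ∀ t ∈ Ioo (0:ℝ) 1, |B t| ≤ M) (hh : IntegrableOn h (Ioo (0:ℝ) 1))
    (hH : ∀ s ∈ Icc (0:ℝ) 1, ∫ t in Ioo 0 s, h t ≤ 0) (hH1 : ∫ t in Ioo (0:ℝ) 1, h t = 0) :
    0 ≤ ∫ t in Ioo 0 1, B t * h t := by
  have : IsFiniteMeasure (volume.restrict (Icc (-M) M)) :=
    ⟨by rw [Measure.restrict_apply_univ]; exact measure_Icc_lt_top⟩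
  -- layer cake: `M - B t` is the length of `{u ∈ [-M, M] | B t ≤ u}`
  set G : ℝ × ℝ → ℝ := {p | B p.1 ≤ p.2}.indicator fun p => h p.1
  have hS : MeasurableSet {p : ℝ × ℝ | B p.1 ≤ p.2} :=
    measurableSet_le (hBm.comp measurable_fst) measurable_snd
  have hG : Integrable G ((volume.restrict (Ioo 0 1)).prod (volume.restrict (Icc (-M) M))) :=
    (hh.comp_fst _).indicator hS
  have inner_u : ∀ t ∈ Ioo (0:ℝ) 1, ∫ u in Icc (-M) M, G (t, u) = (M - B t) * h t := by
    intro t ht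
    have hBt := abs_le.mp (hBM t ht)
    have hK : Icc (-M) M ∩ Ici (B t) = Icc (B t) M :=
      ext fun u => ⟨fun ⟨⟨_, h2⟩, h3⟩ => ⟨h3, h2⟩, fun ⟨h1, h2⟩ => ⟨⟨hBt.1.trans h1, h2⟩, h1⟩⟩
    rw [show (fun u => G (t, u)) = (Ici (B t)).indicator fun _ => h t from rfl,
      setIntegral_indicator measurableSet_Ici, hK, setIntegral_const,
      Real.volume_real_Icc_of_le hBt.2, smul_eq_mul]
  have inner_t : ∀ u, ∫ t in Ioo 0 1, G (t, u) ≤ 0 := fun u => by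
    obtain ⟨s, hs, hAs⟩ := hB.exists_sublevel_ae_eq_Ioo u
    rw [show (fun t => G (t, u)) = {t | B t ≤ u}.indicator h from rfl,
      setIntegral_indicator (measurableSet_le hBm measurable_const), inter_comm,
      setIntegral_congr_set hAs]
    exact hH s hs
  have hBh : IntegrableOn (fun t => B t * h t) (Ioo 0 1) :=
    hh.bdd_mul hBm.aestronglyMeasurable ((ae_restrict_iff' measurableSet_Ioo).mpr
      (ae_of_all _ hBM))
  have key : ∫ t in Ioo 0 1, (M - B t) * h t ≤ 0 := by
    rw [setIntegral_congr_fun measurableSet_Ioo fun t ht => (inner_u t ht).symm]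
    exact (integral_integral_swap (f := fun t u => G (t, u)) hG).trans_le
      (integral_nonpos inner_t)
  simp only [sub_mul] at key
  rw [integral_sub (hh.const_mul M) hBh, integral_const_mul, hH1] at key
  linarith

section Exchange

variable {ι : Type*} [DecidableEq ι] {q : ι → ℝ → ℝ}

theorem measurable_bernoulliExp (hq : ∀ n, Measurable (q n)) (s : Finset ι)
    (γ : Finset ι → ℝ) : Measurable fun t => bernoulliExp s (fun n => q n t) γ := by
  simp only [bernoulliExp, bernoulliWeight]
  fun_prop

theorem integrable_bernoulliExp {μ : Measure ℝ} [IsFiniteMeasure μ] (hq : ∀ n, Measurable (q n))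
    (hq01 : ∀ n t, q n t ∈ Icc (0:ℝ) 1) (s : Finset ι) (γ : Finset ι → ℝ) :
    Integrable (fun t => bernoulliExp s (fun n => q n t) γ) μ :=
  (integrable_const (∑ t ∈ s.powerset, |γ t|)).mono'
    (measurable_bernoulliExp hq s γ).aestronglyMeasurable
    (ae_of_all _ fun t => abs_bernoulliExp_le fun n => hq01 n t)

variable [Fintype ι] {c : Finset ι → ℝ}

/-- The increment is `∫ (g - f) B` with `B` increasing, since `c` has increasing increments and
the other coordinates are increasing. -/
theorem setIntegral_bernoulliExp_update_le
    (hc : ∀ a u u', u ⊆ u' → a ∉ u' → c (insert a u) - c u ≤ c (insert a u') - c u')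
    (hqm : ∀ n, Measurable (q n)) (hq : ∀ n, MonotoneOn (q n) (Ioo 0 1))
    (hq01 : ∀ n t, q n t ∈ Icc (0:ℝ) 1) (a : ι) {f g : ℝ → ℝ}
    (hfm : Measurable f) (hgm : Measurable g)
    (hf01 : ∀ t, f t ∈ Icc (0:ℝ) 1) (hg01 : ∀ t, g t ∈ Icc (0:ℝ) 1)
    (hcmp : ∀ s ∈ Icc (0:ℝ) 1, ∫ t in Ioo 0 s, g t ≤ ∫ t in Ioo 0 s, f t)
    (heq : ∫ t in Ioo (0:ℝ) 1, g t = ∫ t in Ioo (0:ℝ) 1, f t) :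
    ∫ t in Ioo 0 1, bernoulliExp Finset.univ (fun n => Function.update q a f n t) c
      ≤ ∫ t in Ioo 0 1, bernoulliExp Finset.univ (fun n => Function.update q a g n t) c := by
  have ha : a ∉ Finset.univ.erase a := Finset.notMem_erase a _
  set B : ℝ → ℝ := fun t =>
    bernoulliExp (Finset.univ.erase a) (fun n => q n t) (fun u => c (insert a u) - c u)
  have hexp : ∀ (x : ℝ → ℝ) t, bernoulliExp Finset.univ (fun n => Function.update q a x n t) c
      = bernoulliExp (Finset.univ.erase a) (fun n => q n t) c + x t * B t := fun x t => by
    have : (fun n => Function.update q a x n t) = Function.update (fun n => q n t) a (x t) :=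
      funext (Function.apply_update (fun _ r => r t) q a x)
    rw [this, bernoulliExp_univ_update]
  have hB : MonotoneOn B (Ioo 0 1) := fun t ht t' ht' htt' =>
    bernoulliExp_mono (fun u u' huu' hu' => hc a u u' huu' fun h => ha (hu' h))
      (fun n _ => hq01 n t) (fun n _ => hq01 n t') fun n _ => hq n ht ht' htt'
  have hI : ∀ {x : ℝ → ℝ}, Measurable x → (∀ t, x t ∈ Icc (0:ℝ) 1) → ∀ s ≤ 1,
      IntegrableOn x (Ioo 0 s) := fun hxm hx s hs =>
    IntegrableOn.mono_set ((integrable_const 1).mono' hxm.aestronglyMeasurable (ae_of_all _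
      fun t => abs_le.mpr ⟨by linarith [(hx t).1], (hx t).2⟩)) (Ioo_subset_Ioo_right hs)
  have key := setIntegral_mul_nonneg_of_monotoneOn (h := fun t => g t - f t) hB
    (measurable_bernoulliExp hqm _ _) (fun t _ => abs_bernoulliExp_le fun n => hq01 n t)
    ((hI hgm hg01 1 le_rfl).sub (hI hfm hf01 1 le_rfl))
    (fun s hs => by
      rw [integral_sub (hI hgm hg01 s hs.2) (hI hfm hf01 s hs.2)]
      linarith [hcmp s hs])
    (by rw [integral_sub (hI hgm hg01 1 le_rfl) (hI hfm hf01 1 le_rfl), heq, sub_self])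
  have hupd : ∀ {x : ℝ → ℝ}, Measurable x → (∀ t, x t ∈ Icc (0:ℝ) 1) →
      Integrable (fun t => bernoulliExp Finset.univ (fun n => Function.update q a x n t) c)
        (volume.restrict (Ioo 0 1)) := fun hxm hx => by
    refine integrable_bernoulliExp (fun n => ?_) (fun n t => ?_) _ _ <;>
      rcases eq_or_ne n a with rfl | hn <;> simp [*]
  rw [← sub_nonneg, ← integral_sub (hupd hgm hg01) (hupd hfm hf01)]
  refine key.trans_eq (setIntegral_congr_fun measurableSet_Ioo fun t _ => ?_)
  simp only [hexp]
  ring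

/-- A hybrid argument: exchange the coordinates one at a time. -/
theorem setIntegral_bernoulliExp_le
    (hc : ∀ a u u', u ⊆ u' → a ∉ u' → c (insert a u) - c u ≤ c (insert a u') - c u')
    {f g : ι → ℝ → ℝ} (hfm : ∀ n, Measurable (f n)) (hgm : ∀ n, Measurable (g n))
    (hf : ∀ n, MonotoneOn (f n) (Ioo 0 1)) (hg : ∀ n, MonotoneOn (g n) (Ioo 0 1))
    (hf01 : ∀ n t, f n t ∈ Icc (0:ℝ) 1) (hg01 : ∀ n t, g n t ∈ Icc (0:ℝ) 1)
    (hcmp : ∀ n, ∀ s ∈ Icc (0:ℝ) 1, ∫ t in Ioo 0 s, g n t ≤ ∫ t in Ioo 0 s, f n t)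
    (heq : ∀ n, ∫ t in Ioo (0:ℝ) 1, g n t = ∫ t in Ioo (0:ℝ) 1, f n t) :
    ∫ t in Ioo 0 1, bernoulliExp Finset.univ (fun n => f n t) c
      ≤ ∫ t in Ioo 0 1, bernoulliExp Finset.univ (fun n => g n t) c := by
  set hyb : Finset ι → ι → ℝ → ℝ := fun S n => if n ∈ S then g n else f n
  have hyb_prop : ∀ S n, Measurable (hyb S n) ∧ MonotoneOn (hyb S n) (Ioo 0 1) ∧
      ∀ t, hyb S n t ∈ Icc (0:ℝ) 1 := fun S n => by
    simp only [hyb]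
    split_ifs
    exacts [⟨hgm n, hg n, hg01 n⟩, ⟨hfm n, hf n, hf01 n⟩]
  suffices ∀ S, ∫ t in Ioo 0 1, bernoulliExp Finset.univ (fun n => f n t) c
      ≤ ∫ t in Ioo 0 1, bernoulliExp Finset.univ (fun n => hyb S n t) c by
    simpa [hyb] using this Finset.univ
  intro S
  induction S using Finset.induction_on with
  | empty => simp [hyb]
  | @insert a S ha ih =>
    have e₁ : Function.update (hyb S) a (f a) = hyb S := by
      rw [Function.update_eq_self_iff]
      simp [hyb, ha]
    have e₂ : Function.update (hyb S) a (g a) = hyb (insert a S) := by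
      funext n
      rcases eq_or_ne n a with rfl | hn <;> simp [hyb, *]
    refine ih.trans ?_
    rw [← e₁, ← e₂]
    exact setIntegral_bernoulliExp_update_le hc (fun n => (hyb_prop S n).1)
      (fun n => (hyb_prop S n).2.1) (fun n => (hyb_prop S n).2.2) a (hfm a) (hgm a)
      (hf01 a) (hg01 a) (hcmp a) (heq a)

end Exchange

namespace IsBMM

variable {Ω : Type*} [MeasurableSpace Ω] {P : Measure Ω} {N : ℕ} {D : Fin N → Ω → ℝ}
  {Z : Ω → ℝ} {π : Fin N → ℝ} {p : Fin N → ℝ → ℝ}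

theorem mem_Icc (hM : IsBMM P D Z π p) (n : Fin N) (ω : Ω) : D n ω ∈ Icc (0:ℝ) 1 := by
  rcases hM.values n ω with h | h <;> simp [h]

def pattern (u : Finset (Fin N)) : Set (Fin N → ℝ) := {d | ∀ n, d n = if n ∈ u then 1 else 0}

theorem measurableSet_pattern (u : Finset (Fin N)) : MeasurableSet (pattern u) := by
  simp only [pattern, ofPred_forall]
  exact MeasurableSet.iInter fun n => measurable_pi_apply n (measurableSet_singleton _)

theorem mem_pattern_iff (hM : IsBMM P D Z π p) (ω : Ω) (u : Finset (Fin N)) :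
    (fun n => D n ω) ∈ pattern u ↔ Finset.univ.filter (fun n => D n ω = 1) = u := by
  refine ⟨fun h => Finset.ext fun n => ?_, fun h n => ?_⟩
  · simp only [Finset.mem_filter, Finset.mem_univ, true_and, h n]
    split_ifs with hn <;> simp [hn]
  · subst h
    rcases hM.values n ω with h | h <;> simp [h]

theorem measureReal_pattern (hM : IsBMM P D Z π p) (u : Finset (Fin N)) :
    P.real ((fun ω n => D n ω) ⁻¹' pattern u)
      = ∫ z, bernoulliWeight Finset.univ (fun n => p n z) u ∂(P.map Z) := by
  have h := hM.condIndep (fun n => decide (n ∈ u)) univ MeasurableSet.univ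
  simp only [preimage_univ, inter_univ, Measure.restrict_univ, decide_eq_true_eq] at h
  have hprod : ∀ z, ∏ n, (if n ∈ u then p n z else 1 - p n z)
      = bernoulliWeight Finset.univ (fun n => p n z) u := fun z => by
    rw [Finset.prod_ite, bernoulliWeight, Finset.filter_mem_eq_inter, Finset.univ_inter,
      Finset.filter_not, Finset.filter_mem_eq_inter, Finset.univ_inter, Finset.sdiff_eq_filter]
  have hset : (fun ω n => D n ω) ⁻¹' pattern u
      = ⋂ n, {ω | D n ω = if n ∈ u then (1:ℝ) else 0} := by
    ext ω
    simp [pattern]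
  rw [measureReal_def, hset, h, ENNReal.toReal_ofReal (integral_nonneg fun z =>
    Finset.prod_nonneg fun n _ => ?_)]
  · exact integral_congr_ae (ae_of_all _ hprod)
  · split_ifs
    exacts [(hM.p_mem n z).1, sub_nonneg.mpr (hM.p_mem n z).2]

/-- Conditioning on the default pattern: given the pattern `u`, independent of the exposures,
the loss is `∑ n ∈ u, ηₙ`, and the pattern has the mixed Bernoulli distribution. -/
theorem integral_comp_sum_mul_eq_integral_bernoulliExp [IsFiniteMeasure P] (hM : IsBMM P D Z π p)
    {η : Fin N → Ω → ℝ} (hind : IndepFun (fun ω n => η n ω) (fun ω n => D n ω) P)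
    {ψ : ℝ → ℝ} (hψ : Measurable ψ)
    (hint : ∀ u : Finset (Fin N), Integrable (fun ω => ψ (∑ n ∈ u, η n ω)) P) :
    ∫ ω, ψ (∑ n, η n ω * D n ω) ∂P = ∫ z, bernoulliExp Finset.univ (fun n => p n z)
      (fun u => ∫ ω, ψ (∑ n ∈ u, η n ω) ∂P) ∂(P.map Z) := by
  have hDm : Measurable fun ω n => D n ω := measurable_pi_lambda _ hM.measD
  set A : Finset (Fin N) → Set Ω := fun u => (fun ω n => D n ω) ⁻¹' pattern u
  have hA : ∀ u, MeasurableSet (A u) := fun u => hDm (measurableSet_pattern u)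
  have hpt : ∀ ω, ψ (∑ n, η n ω * D n ω)
      = ∑ u ∈ Finset.univ.powerset, (A u).indicator (fun ω => ψ (∑ n ∈ u, η n ω)) ω := by
    intro ω
    have hsum : ∑ n, η n ω * D n ω = ∑ n ∈ Finset.univ.filter (fun n => D n ω = 1), η n ω := by
      rw [Finset.sum_filter]
      refine Finset.sum_congr rfl fun n _ => ?_
      rcases hM.values n ω with h | h <;> simp [h]
    rw [hsum, Finset.sum_eq_single_of_mem (f := fun u => (A u).indicator
      (fun ω => ψ (∑ n ∈ u, η n ω)) ω) _ (Finset.mem_powerset.mpr (Finset.subset_univ _))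
      fun u _ hu => indicator_of_notMem (s := A u)
        (fun h => hu ((hM.mem_pattern_iff ω u).mp h).symm) _]
    exact (indicator_of_mem (s := A _) ((hM.mem_pattern_iff ω _).mpr rfl)
      (fun ω => ψ (∑ n ∈ _, η n ω))).symm
  have hfac : ∀ u, ∫ ω, (A u).indicator (fun ω => ψ (∑ n ∈ u, η n ω)) ω ∂P
      = (∫ ω, ψ (∑ n ∈ u, η n ω) ∂P) * P.real (A u) := fun u => by
    have hi := hind.comp (φ := fun v => ψ (∑ n ∈ u, v n))
      (ψ := (pattern u).indicator (1 : (Fin N → ℝ) → ℝ))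
      (by fun_prop) (measurable_one.indicator (measurableSet_pattern u))
    calc ∫ ω, (A u).indicator (fun ω => ψ (∑ n ∈ u, η n ω)) ω ∂P
        = ∫ ω, ψ (∑ n ∈ u, η n ω) * (pattern u).indicator 1 (fun n => D n ω) ∂P :=
          integral_congr_ae (ae_of_all _ fun ω => by by_cases h : ω ∈ A u <;> simp_all [A])
      _ = (∫ ω, ψ (∑ n ∈ u, η n ω) ∂P) * ∫ ω, (pattern u).indicator 1 (fun n => D n ω) ∂P :=
          hi.integral_fun_mul_eq_mul_integral (hint u).aestronglyMeasurable
            ((measurable_one.indicator (measurableSet_pattern u)).comp hDm).aestronglyMeasurable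
      _ = _ := by rw [← integral_indicator_one (hA u)]; rfl
  have hw : ∀ u, Integrable (fun z => bernoulliWeight Finset.univ (fun n => p n z) u)
      (P.map Z) := fun u => (integrable_const 1).mono'
    (by have := hM.measp; simp only [bernoulliWeight]; fun_prop)
    (ae_of_all _ fun z => abs_bernoulliWeight_le_one (fun n => hM.p_mem n z) u)
  simp only [bernoulliExp]
  rw [integral_congr_ae (ae_of_all _ hpt), integral_finsetSum _ fun u _ =>
    (hint u).indicator (hA u), integral_finsetSum _ fun u _ => (hw u).const_mul _]
  refine Finset.sum_congr rfl fun u _ => ?_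
  rw [hfac, hM.measureReal_pattern, integral_const_mul]

theorem distFun_eq_cdf [IsProbabilityMeasure P] (hM : IsBMM P D Z π p) :
    distFun P Z = cdf (P.map Z) := by
  have := Measure.isProbabilityMeasure_map (μ := P) hM.measZ.aemeasurable
  funext x
  rw [cdf_eq_real, measureReal_def, Measure.map_apply hM.measZ measurableSet_Iic]
  rfl

theorem defaultIntegral_eq_setIntegral_quantile [IsProbabilityMeasure P] (hM : IsBMM P D Z π p)
    (n : Fin N) {s : ℝ} (hs : s ∈ Icc (0:ℝ) 1) :
    defaultIntegral P Z (p n) s = ∫ t in Ioo 0 s, p n (quantile (P.map Z) t) := by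
  rw [defaultIntegral, intervalIntegral.integral_of_le hs.1, integral_Ioc_eq_integral_Ioo,
    hM.distFun_eq_cdf]
  refine setIntegral_congr_fun measurableSet_Ioo fun t ht => ?_
  rw [quantile_of_mem _ ⟨ht.1, ht.2.trans_le hs.2⟩]

theorem setIntegral_comp_quantile_eq [IsProbabilityMeasure P] (hM : IsBMM P D Z π p) (n : Fin N) :
    ∫ t in Ioo 0 1, p n (quantile (P.map Z) t) = π n := by
  have := Measure.isProbabilityMeasure_map (μ := P) hM.measZ.aemeasurable
  have h := hM.condVersion n univ MeasurableSet.univ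
  rw [preimage_univ, inter_univ, Measure.restrict_univ, hM.prob n,
    ENNReal.ofReal_eq_ofReal_iff (hM.pi_mem n).1 (integral_nonneg fun z => (hM.p_mem n z).1)] at h
  rw [h, integral_eq_setIntegral_quantile _ (hM.measp n).aestronglyMeasurable]

theorem integral_comp_sum_mul_eq_setIntegral_quantile [IsProbabilityMeasure P]
    (hM : IsBMM P D Z π p) {η : Fin N → Ω → ℝ}
    (hind : IndepFun (fun ω n => η n ω) (fun ω n => D n ω) P) {ψ : ℝ → ℝ}
    (hψ : Measurable ψ) (hint : ∀ u : Finset (Fin N), Integrable (fun ω => ψ (∑ n ∈ u, η n ω)) P) :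
    ∫ ω, ψ (∑ n, η n ω * D n ω) ∂P = ∫ t in Ioo 0 1, bernoulliExp Finset.univ
      (fun n => p n (quantile (P.map Z) t)) (fun u => ∫ ω, ψ (∑ n ∈ u, η n ω) ∂P) := by
  have := Measure.isProbabilityMeasure_map (μ := P) hM.measZ.aemeasurable
  rw [hM.integral_comp_sum_mul_eq_integral_bernoulliExp hind hψ hint,
    integral_eq_setIntegral_quantile]
  exact (measurable_bernoulliExp hM.measp _ _).aestronglyMeasurable

end IsBMM

theorem IsSIBMM.monotoneOn_comp_quantile {Ω : Type*} [MeasurableSpace Ω] {P : Measure Ω} {N : ℕ}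
    {D : Fin N → Ω → ℝ} {Z : Ω → ℝ} {π : Fin N → ℝ} {p : Fin N → ℝ → ℝ}
    (hM : IsSIBMM P D Z π p) (n : Fin N) :
    MonotoneOn (fun t => p n (quantile (P.map Z) t)) (Ioo 0 1) := fun t ht t' ht' htt' => by
  simp only [quantile_of_mem _ ht, quantile_of_mem _ ht']
  exact hM.mono n (monotoneOn_qinv_cdf _ ht ht' htt')

section Loss

variable {Ω : Type*} [MeasurableSpace Ω] {P : Measure Ω} {N : ℕ} {ψ : ℝ → ℝ}

theorem integral_comp_sum_insert_sub_le (hψ : ConvexOn ℝ (Ici 0) ψ) {η : Fin N → Ω → ℝ}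
    (hη : ∀ n ω, 0 ≤ η n ω)
    (hint : ∀ u : Finset (Fin N), Integrable (fun ω => ψ (∑ n ∈ u, η n ω)) P)
    {a : Fin N} {u u' : Finset (Fin N)} (huu' : u ⊆ u') (ha : a ∉ u') :
    ∫ ω, ψ (∑ n ∈ insert a u, η n ω) ∂P - ∫ ω, ψ (∑ n ∈ u, η n ω) ∂P
      ≤ ∫ ω, ψ (∑ n ∈ insert a u', η n ω) ∂P - ∫ ω, ψ (∑ n ∈ u', η n ω) ∂P := by
  rw [← integral_sub (hint _) (hint _), ← integral_sub (hint _) (hint _)]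
  refine integral_mono ((hint _).sub (hint _)) ((hint _).sub (hint _)) fun ω => ?_
  have hS : ∀ v : Finset (Fin N), 0 ≤ ∑ n ∈ v, η n ω := fun v =>
    Finset.sum_nonneg fun n _ => hη n ω
  simp only [Finset.sum_insert ha, Finset.sum_insert fun h => ha (huu' h), add_comm (η a ω)]
  exact hψ.map_add_sub_le_map_add_sub (hS u) (add_nonneg (hS u') (hη a ω))
    (Finset.sum_le_sum_of_subset_of_nonneg huu' fun n _ _ => hη n ω) (hη a ω)

theorem tendsto_integral_comp_of_eventually_eq [IsFiniteMeasure P] (hψ : ConvexOn ℝ (Ici 0) ψ)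
    (hψm : Measurable ψ) {X : Ω → ℝ} {Y : ℕ → Ω → ℝ} (hY : ∀ j, Measurable (Y j))
    (hYX : ∀ j ω, Y j ω ∈ Icc 0 (X ω)) (hlim : ∀ ω, ∀ᶠ j in atTop, Y j ω = X ω)
    (hX : Integrable X P) (hψX : Integrable (fun ω => ψ (X ω)) P) :
    Tendsto (fun j => ∫ ω, ψ (Y j ω) ∂P) atTop (𝓝 (∫ ω, ψ (X ω) ∂P)) := by
  obtain ⟨K, hK⟩ := hψ.exists_abs_le_of_mem_Icc
  refine tendsto_integral_of_dominated_convergence (fun ω => |ψ 0| + |ψ (X ω)| + K * (1 + X ω))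
    (fun j => (hψm.comp (hY j)).aestronglyMeasurable)
    (((integrable_const _).add hψX.abs).add (((integrable_const 1).add hX).const_mul K))
    (fun j => ae_of_all _ fun ω => hK _ _ (hYX j ω))
    (ae_of_all _ fun ω => tendsto_nhds_of_eventually_eq ((hlim ω).mono fun j hj => by rw [hj]))

/-- Truncating the exposures `δₙ` at level `j` does not change the loss once `j ≥ max δₙ`. -/
theorem tendsto_integral_comp_sum_min [IsFiniteMeasure P] (hψ : ConvexOn ℝ (Ici 0) ψ)
    (hψm : Measurable ψ) {D δ : Fin N → Ω → ℝ} (hD : ∀ n, Measurable (D n))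
    (hD01 : ∀ n ω, D n ω ∈ Icc (0:ℝ) 1) (hδ : ∀ n, Measurable (δ n))
    (hδ0 : ∀ n ω, 0 ≤ δ n ω) (hδi : ∀ n, Integrable (δ n) P) {e : Fin N → ℝ}
    (he : ∀ n, 0 ≤ e n) (hψX : Integrable (fun ω => ψ (∑ n, e n * δ n ω * D n ω)) P) :
    Tendsto (fun j : ℕ => ∫ ω, ψ (∑ n, e n * min (δ n ω) j * D n ω) ∂P) atTop
      (𝓝 (∫ ω, ψ (∑ n, e n * δ n ω * D n ω) ∂P)) := by
  refine tendsto_integral_comp_of_eventually_eq hψ hψm (fun j => by fun_prop)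
    (fun j ω => ⟨?_, ?_⟩) (fun ω => ?_) ?_ hψX
  · exact Finset.sum_nonneg fun n _ =>
      mul_nonneg (mul_nonneg (he n) (le_min (hδ0 n ω) j.cast_nonneg)) (hD01 n ω).1
  · exact Finset.sum_le_sum fun n _ => mul_le_mul_of_nonneg_right
      (mul_le_mul_of_nonneg_left (min_le_left _ _) (he n)) (hD01 n ω).1
  · filter_upwards [eventually_all.mpr fun n =>
      tendsto_natCast_atTop_atTop.eventually_ge_atTop (δ n ω)] with j hj
    simp only [min_eq_left (hj _)]
  · refine integrable_finsetSum _ fun n _ => ((hδi n).const_mul (e n)).mono' (by fun_prop)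
      (ae_of_all _ fun ω => ?_)
    rw [norm_mul, norm_mul, Real.norm_of_nonneg (he n), Real.norm_of_nonneg (hδ0 n ω)]
    exact mul_le_of_le_one_right (mul_nonneg (he n) (hδ0 n ω))
      ((abs_le.mpr ⟨by linarith [(hD01 n ω).1], (hD01 n ω).2⟩))

end Loss

theorem IsSIBMM.integral_comp_sum_mul_le {Ω : Type*} [MeasurableSpace Ω] {P : Measure Ω}
    [IsProbabilityMeasure P] {N : ℕ} {D D' : Fin N → Ω → ℝ} {Z Z' : Ω → ℝ} {π : Fin N → ℝ}
    {p p' : Fin N → ℝ → ℝ} (hM : IsSIBMM P D Z π p) (hM' : IsSIBMM P D' Z' π p')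
    (hG : ∀ n, ∀ s ∈ Icc (0:ℝ) 1, defaultIntegral P Z' (p' n) s ≤ defaultIntegral P Z (p n) s)
    {η : Fin N → Ω → ℝ} (hη : ∀ n, Measurable (η n)) (hη0 : ∀ n ω, 0 ≤ η n ω)
    {C : Fin N → ℝ} (hηC : ∀ n ω, η n ω ≤ C n)
    (hind : IndepFun (fun ω n => η n ω) (fun ω n => D n ω) P)
    (hind' : IndepFun (fun ω n => η n ω) (fun ω n => D' n ω) P)
    {ψ : ℝ → ℝ} (hψ : ConvexOn ℝ (Ici 0) ψ) (hψm : Measurable ψ) :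
    ∫ ω, ψ (∑ n, η n ω * D n ω) ∂P ≤ ∫ ω, ψ (∑ n, η n ω * D' n ω) ∂P := by
  obtain ⟨K, hK⟩ := hψ.exists_abs_le_of_mem_Icc
  have hS : ∀ (u : Finset (Fin N)) ω, ∑ n ∈ u, η n ω ∈ Icc 0 (∑ n, C n) := fun u ω =>
    ⟨Finset.sum_nonneg fun n _ => hη0 n ω, (Finset.sum_le_sum_of_subset_of_nonneg
      (Finset.subset_univ u) fun n _ _ => hη0 n ω).trans (Finset.sum_le_sum fun n _ => hηC n ω)⟩
  have hint : ∀ u : Finset (Fin N), Integrable (fun ω => ψ (∑ n ∈ u, η n ω)) P := fun u =>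
    (integrable_const _).mono'
      (hψm.comp (Finset.measurable_sum u fun n _ => hη n)).aestronglyMeasurable
      (ae_of_all _ fun ω => hK _ _ (hS u ω))
  rw [hM.integral_comp_sum_mul_eq_setIntegral_quantile hind hψm hint,
    hM'.integral_comp_sum_mul_eq_setIntegral_quantile hind' hψm hint]
  refine setIntegral_bernoulliExp_le
    (fun a u u' huu' ha => integral_comp_sum_insert_sub_le hψ hη0 hint huu' ha)
    (fun n => (hM.measp n).comp (measurable_quantile _))
    (fun n => (hM'.measp n).comp (measurable_quantile _))
    hM.monotoneOn_comp_quantile hM'.monotoneOn_comp_quantile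
    (fun n t => hM.p_mem n _) (fun n t => hM'.p_mem n _) (fun n s hs => ?_) fun n => ?_
  · rw [← hM.defaultIntegral_eq_setIntegral_quantile n hs,
      ← hM'.defaultIntegral_eq_setIntegral_quantile n hs]
    exact hG n s hs
  · rw [hM.setIntegral_comp_quantile_eq, hM'.setIntegral_comp_quantile_eq]

theorem stmt0_general {Ω : Type*} [MeasurableSpace Ω] (P : MeasureTheory.Measure Ω)
    [MeasureTheory.IsProbabilityMeasure P] {N : ℕ}
    (D D' : Fin N → Ω → ℝ) (Z Z' : Ω → ℝ) (π : Fin N → ℝ) (p p' : Fin N → ℝ → ℝ)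
    (hM : IsSIBMM P D Z π p) (hM' : IsSIBMM P D' Z' π p')
    (hG : ∀ n, ∀ s ∈ Set.Icc (0:ℝ) 1,
      defaultIntegral P Z' (p' n) s ≤ defaultIntegral P Z (p n) s)
    (δ : Fin N → Ω → ℝ) (hδmeas : ∀ n, Measurable (δ n))
    (hδnonneg : ∀ n ω, 0 ≤ δ n ω) (hδint : ∀ n, MeasureTheory.Integrable (δ n) P)
    (hδmodels : ProbabilityTheory.IndepFun (fun ω => fun n => δ n ω)
      (fun ω => ((fun n => D n ω), Z ω, (fun n => D' n ω), Z' ω)) P)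
    (e : Fin N → ℝ) (he : ∀ n, 0 < e n) :
    ConvexOrder P (fun ω => ∑ n, e n * δ n ω * D n ω)
      (fun ω => ∑ n, e n * δ n ω * D' n ω) := by
  intro φ hφ hX hX'
  obtain ⟨ψ, hψm, hψφ⟩ := hφ.exists_measurable_eqOn
  have hψ := hφ.congr hψφ.symm
  have hloss : ∀ {Dm : Fin N → Ω → ℝ}, (∀ n ω, Dm n ω ∈ Icc (0:ℝ) 1) →
      (fun ω => φ (∑ n, e n * δ n ω * Dm n ω)) = fun ω => ψ (∑ n, e n * δ n ω * Dm n ω) :=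
    fun hDm => funext fun ω => (hψφ (Finset.sum_nonneg fun n _ => mul_nonneg
      (mul_nonneg (he n).le (hδnonneg n ω)) (hDm n ω).1)).symm
  rw [hloss hM.mem_Icc] at hX ⊢
  rw [hloss hM'.mem_Icc] at hX' ⊢
  refine le_of_tendsto_of_tendsto'
    (tendsto_integral_comp_sum_min hψ hψm hM.measD hM.mem_Icc hδmeas hδnonneg hδint
      (fun n => (he n).le) hX)
    (tendsto_integral_comp_sum_min hψ hψm hM'.measD hM'.mem_Icc hδmeas hδnonneg hδint
      (fun n => (he n).le) hX') fun j => ?_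
  have htrunc : Measurable fun (v : Fin N → ℝ) n => e n * min (v n) (j:ℝ) := by fun_prop
  exact hM.integral_comp_sum_mul_le hM' hG (fun n => by fun_prop)
    (fun n ω => mul_nonneg (he n).le (le_min (hδnonneg n ω) j.cast_nonneg))
    (fun n ω => mul_le_mul_of_nonneg_left (min_le_right _ _) (he n).le)
    (hδmodels.comp htrunc measurable_fst) (hδmodels.comp htrunc
      (by fun_prop : Measurable fun x : (Fin N → ℝ) × ℝ × (Fin N → ℝ) × ℝ => x.2.2.1)) hψ hψm

/-- Theorem: comparison of losses in siBMMs.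
If two siBMMs with the same default probabilities satisfy `G_{Dₙ,Z} ≥ G_{Dₙ',Z'}` pointwise,
then the portfolio losses are ordered in convex order. -/
theorem stmt0 {Ω : Type*} [MeasurableSpace Ω] (P : MeasureTheory.Measure Ω)
    [MeasureTheory.IsProbabilityMeasure P] (hP : MeasureAtomless P) {N : ℕ}
    (D D' : Fin N → Ω → ℝ) (Z Z' : Ω → ℝ) (π : Fin N → ℝ) (p p' : Fin N → ℝ → ℝ)
    (hM : IsSIBMM P D Z π p) (hM' : IsSIBMM P D' Z' π p')
    (hG : ∀ n, ∀ s ∈ Set.Icc (0:ℝ) 1,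
      defaultIntegral P Z' (p' n) s ≤ defaultIntegral P Z (p n) s)
    (δ : Fin N → Ω → ℝ) (hδmeas : ∀ n, Measurable (δ n))
    (hδnonneg : ∀ n ω, 0 ≤ δ n ω) (hδint : ∀ n, MeasureTheory.Integrable (δ n) P)
    (hδindep : ProbabilityTheory.iIndepFun δ P)
    (hδmodels : ProbabilityTheory.IndepFun (fun ω => fun n => δ n ω)
      (fun ω => ((fun n => D n ω), Z ω, (fun n => D' n ω), Z' ω)) P)
    (e : Fin N → ℝ) (he : ∀ n, 0 < e n) :
    ConvexOrder P (fun ω => ∑ n, e n * δ n ω * D n ω)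
      (fun ω => ∑ n, e n * δ n ω * D' n ω) :=
  stmt0_general P D D' Z Z' π p p' hM hM' hG δ hδmeas hδnonneg hδint hδmodels e he
end

section
/- Let Y, ε_1, …, ε_N be independent real-valued random variables, let f_n : ℝ² → ℝ be measurable and increasing in its first argument, and set X_n := f_n(Y, ε_n). Let c_n ∈ ℝ, define default indicators D_n := 1_{{X_n ≤ c_n}}, and let Z := g(Y) for a strictly decreasing function g : ℝ → ℝ. Then D_1, …, D_N are conditionally independent given Z, and for each n the conditional probability z ↦ P(D_n = 1 | Z = z) admits an increasing version. -/
open MeasureTheory ProbabilityTheory Set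

/-!
Put `Sₙ = {fₙ ≤ cₙ}`, so that `Dₙ = 1` exactly when `(Y, εₙ) ∈ Sₙ`. Independence makes the joint
law of `(Y, ε)` the product of the marginals, so by Fubini, given `Y = y` the defaults are
independent with probabilities `hₙ(y) = P((y, εₙ) ∈ Sₙ)`. Since `fₙ` is increasing in `y`,
`hₙ` is decreasing, and since `g` is strictly decreasing, `hₙ = pₙ ∘ g` for an increasing
`pₙ` (the supremum of `hₙ` over `{g ≤ z}`), which is then a version of `P(Dₙ = 1 | Z = ·)`.
-/

theorem exists_monotone_comp_eq_of_strictAnti {α : Type*} [LinearOrder α] {g : α → ℝ}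
    (hg : StrictAnti g) {h : α → ℝ} (hh : Antitone h) (hh01 : ∀ y, h y ∈ Icc (0 : ℝ) 1) :
    ∃ p : ℝ → ℝ, Monotone p ∧ (∀ z, p z ∈ Icc (0 : ℝ) 1) ∧ ∀ y, p (g y) = h y := by
  have hle : ∀ z, ∀ v ∈ insert (0 : ℝ) (h '' {y | g y ≤ z}), v ≤ 1 := by
    rintro z v (rfl | ⟨y, -, rfl⟩)
    exacts [zero_le_one, (hh01 y).2]
  refine ⟨fun z => sSup (insert 0 (h '' {y | g y ≤ z})), fun z z' hzz' => ?_,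
    fun z => ⟨le_csSup ⟨1, hle z⟩ (mem_insert _ _), csSup_le (insert_nonempty _ _) (hle z)⟩,
    fun y => ?_⟩
  · exact csSup_le_csSup ⟨1, hle z'⟩ (insert_nonempty _ _)
      (insert_subset_insert (image_mono fun y hy => hy.trans hzz'))
  · refine IsGreatest.csSup_eq ⟨mem_insert_of_mem _ ⟨y, le_refl (g y), rfl⟩, ?_⟩
    rintro v (rfl | ⟨y', hy', rfl⟩)
    exacts [(hh01 y).1, hh (hg.le_iff_ge.mp hy')]

section ThresholdModel

variable {Ω β : Type*} [MeasurableSpace Ω] [MeasurableSpace β] {P : Measure Ω} {N : ℕ}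
  {Y : Ω → β} {ε : Fin N → Ω → β}

theorem map_prodMk_pi_eq_prod_pi_of_iIndepFun_cons (hY : Measurable Y)
    (hε : ∀ n, Measurable (ε n)) (hindep : iIndepFun (Fin.cons Y ε : Fin (N + 1) → Ω → β) P) :
    P.map (fun ω => (Y ω, fun n => ε n ω))
      = (P.map Y).prod (Measure.pi fun n => P.map (ε n)) := by
  have := hindep.isProbabilityMeasure
  set W : Fin (N + 1) → Ω → β := Fin.cons Y ε
  have hW : ∀ i, Measurable (W i) := Fin.cases hY hε
  let e := MeasurableEquiv.piFinSuccAbove (fun _ : Fin (N + 1) => β) 0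
  have hcomp : (fun ω => (Y ω, fun n => ε n ω)) = e ∘ fun ω i => W i ω := by
    rfl
  rw [hcomp, ← Measure.map_map e.measurable (measurable_pi_lambda _ hW),
    hindep.map_fun_eq_pi_map fun i => (hW i).aemeasurable,
    (measurePreserving_piFinSuccAbove (fun i => P.map (W i)) 0).map_eq]
  rfl

theorem measure_preimage_inter_iInter_eq_setLIntegral_prod (hY : Measurable Y)
    (hε : ∀ n, Measurable (ε n)) (hindep : iIndepFun (Fin.cons Y ε : Fin (N + 1) → Ω → β) P)
    {A : Set β} (hA : MeasurableSet A) {S : Fin N → Set (β × β)} (hS : ∀ n, MeasurableSet (S n)) :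
    P (Y ⁻¹' A ∩ ⋂ n, {ω | (Y ω, ε n ω) ∈ S n})
      = ∫⁻ y in A, ∏ n, P.map (ε n) (Prod.mk y ⁻¹' S n) ∂(P.map Y) := by
  have := hindep.isProbabilityMeasure
  have : ∀ n, IsProbabilityMeasure (P.map (ε n)) := fun n =>
    Measure.isProbabilityMeasure_map (hε n).aemeasurable
  set T : Set (β × (Fin N → β)) :=
    Prod.fst ⁻¹' A ∩ ⋂ n, (fun x => (x.1, x.2 n)) ⁻¹' S n
  have hT : MeasurableSet T := by
    refine (measurable_fst hA).inter (MeasurableSet.iInter fun n => ?_)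
    exact (measurable_fst.prodMk ((measurable_pi_apply n).comp measurable_snd)) (hS n)
  calc P (Y ⁻¹' A ∩ ⋂ n, {ω | (Y ω, ε n ω) ∈ S n})
      = P.map (fun ω => (Y ω, fun n => ε n ω)) T := by
        rw [Measure.map_apply (hY.prodMk (measurable_pi_lambda _ hε)) hT]
        congr 1
        ext ω; simp [T]
    _ = ∫⁻ y, A.indicator (fun y => ∏ n, P.map (ε n) (Prod.mk y ⁻¹' S n)) y ∂(P.map Y) := by
        rw [map_prodMk_pi_eq_prod_pi_of_iIndepFun_cons hY hε hindep, Measure.prod_apply hT]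
        refine lintegral_congr fun y => ?_
        by_cases hy : y ∈ A
        · have : Prod.mk y ⁻¹' T = Set.pi univ fun n => Prod.mk y ⁻¹' S n := by
            ext x; simp [T, hy]
          rw [this, Measure.pi_pi, indicator_of_mem hy]
        · have : Prod.mk y ⁻¹' T = ∅ := by
            ext x; simp [T, hy]
          rw [this, measure_empty, indicator_of_notMem hy]
    _ = _ := lintegral_indicator hA _

theorem measure_iInter_inter_preimage_eq_ofReal_setIntegral_prod (hY : Measurable Y)
    (hε : ∀ n, Measurable (ε n)) (hindep : iIndepFun (Fin.cons Y ε : Fin (N + 1) → Ω → β) P)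
    {g : β → ℝ} (hg : Measurable g) {S : Fin N → Set (β × β)} (hS : ∀ n, MeasurableSet (S n))
    {q : Fin N → ℝ → ℝ} (hq : ∀ n, Measurable (q n)) (hq01 : ∀ n z, q n z ∈ Icc (0 : ℝ) 1)
    (hqg : ∀ n y, q n (g y) = (P.map (ε n)).real (Prod.mk y ⁻¹' S n))
    {B : Set ℝ} (hB : MeasurableSet B) :
    P ((⋂ n, {ω | (Y ω, ε n ω) ∈ S n}) ∩ (fun ω => g (Y ω)) ⁻¹' B)
      = ENNReal.ofReal (∫ z in B, ∏ n, q n z ∂(P.map fun ω => g (Y ω))) := by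
  have := hindep.isProbabilityMeasure
  have : ∀ n, IsProbabilityMeasure (P.map (ε n)) := fun n =>
    Measure.isProbabilityMeasure_map (hε n).aemeasurable
  have hprod0 : ∀ z, 0 ≤ ∏ n, q n z := fun z => Finset.prod_nonneg fun n _ => (hq01 n z).1
  have hprod1 : ∀ z, ∏ n, q n z ≤ 1 := fun z =>
    Finset.prod_le_one (fun n _ => (hq01 n z).1) fun n _ => (hq01 n z).2
  have hprod : Measurable fun z => ∏ n, q n z := Finset.measurable_prod _ fun n _ => hq n
  have hint : Integrable (fun z => ∏ n, q n z) ((P.map Y).map g) :=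
    .of_bound hprod.aestronglyMeasurable 1
      (ae_of_all _ fun z => by rw [Real.norm_of_nonneg (hprod0 z)]; exact hprod1 z)
  rw [inter_comm, show P.map (fun ω => g (Y ω)) = (P.map Y).map g from (Measure.map_map hg hY).symm,
    ofReal_integral_eq_lintegral_ofReal hint.integrableOn (ae_of_all _ hprod0),
    setLIntegral_map hB hprod.ennreal_ofReal hg]
  refine (measure_preimage_inter_iInter_eq_setLIntegral_prod hY hε hindep (hg hB) hS).trans
    (setLIntegral_congr_fun (hg hB) fun y _ => ?_)
  rw [ENNReal.ofReal_prod_of_nonneg fun n _ => (hq01 n (g y)).1]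
  exact Finset.prod_congr rfl fun n _ => by rw [hqg, ofReal_measureReal]

theorem measure_mem_inter_preimage_eq_ofReal_setIntegral (hY : Measurable Y)
    (hε : ∀ n, Measurable (ε n)) (hindep : iIndepFun (Fin.cons Y ε : Fin (N + 1) → Ω → β) P)
    {g : β → ℝ} (hg : Measurable g) {S : Fin N → Set (β × β)} (hS : ∀ n, MeasurableSet (S n))
    {p : Fin N → ℝ → ℝ} (hp : ∀ n, Measurable (p n)) (hp01 : ∀ n z, p n z ∈ Icc (0 : ℝ) 1)
    (hpg : ∀ n y, p n (g y) = (P.map (ε n)).real (Prod.mk y ⁻¹' S n))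
    (n : Fin N) {B : Set ℝ} (hB : MeasurableSet B) :
    P ({ω | (Y ω, ε n ω) ∈ S n} ∩ (fun ω => g (Y ω)) ⁻¹' B)
      = ENNReal.ofReal (∫ z in B, p n z ∂(P.map fun ω => g (Y ω))) := by
  have := hindep.isProbabilityMeasure
  have : ∀ m, IsProbabilityMeasure (P.map (ε m)) := fun m =>
    Measure.isProbabilityMeasure_map (hε m).aemeasurable
  have hevent : {ω | (Y ω, ε n ω) ∈ S n}
      = ⋂ m, {ω | (Y ω, ε m ω) ∈ if m = n then S m else univ} := by
    ext ω
    simp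
  rw [hevent, measure_iInter_inter_preimage_eq_ofReal_setIntegral_prod hY hε hindep hg
    (q := fun m z => if m = n then p m z else 1) (fun m => ?_) (fun m => ?_) (fun m z => ?_)
    (fun m y => ?_) hB]
  · simp only [Finset.prod_ite_eq', Finset.mem_univ, if_true]
  all_goals split_ifs
  · exact hS m
  · exact MeasurableSet.univ
  · exact hp m
  · exact measurable_const
  · exact hp01 m z
  · exact ⟨zero_le_one, le_rfl⟩
  · exact hpg m y
  · rw [preimage_univ, probReal_univ]

theorem measure_iInter_mem_ite_inter_preimage_eq_ofReal_setIntegral (hY : Measurable Y)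
    (hε : ∀ n, Measurable (ε n)) (hindep : iIndepFun (Fin.cons Y ε : Fin (N + 1) → Ω → β) P)
    {g : β → ℝ} (hg : Measurable g) {S : Fin N → Set (β × β)} (hS : ∀ n, MeasurableSet (S n))
    {p : Fin N → ℝ → ℝ} (hp : ∀ n, Measurable (p n)) (hp01 : ∀ n z, p n z ∈ Icc (0 : ℝ) 1)
    (hpg : ∀ n y, p n (g y) = (P.map (ε n)).real (Prod.mk y ⁻¹' S n))
    (d : Fin N → Bool) {B : Set ℝ} (hB : MeasurableSet B) :
    P ((⋂ n, {ω | (Y ω, ε n ω) ∈ if d n then S n else (S n)ᶜ}) ∩ (fun ω => g (Y ω)) ⁻¹' B)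
      = ENNReal.ofReal
          (∫ z in B, ∏ n, (if d n then p n z else 1 - p n z) ∂(P.map fun ω => g (Y ω))) := by
  have := hindep.isProbabilityMeasure
  have : ∀ n, IsProbabilityMeasure (P.map (ε n)) := fun n =>
    Measure.isProbabilityMeasure_map (hε n).aemeasurable
  refine measure_iInter_inter_preimage_eq_ofReal_setIntegral_prod hY hε hindep hg
    (fun n => ?_) (fun n => ?_) (fun n z => ?_) (fun n y => ?_) hB <;>
    cases d n <;> simp only [Bool.false_eq_true, if_true, if_false]
  · exact (hS n).compl
  · exact hS n
  · exact (hp n).const_sub 1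
  · exact hp n
  · exact ⟨sub_nonneg.2 (hp01 n z).2, sub_le_self _ (hp01 n z).1⟩
  · exact hp01 n z
  · rw [hpg, preimage_compl, probReal_compl_eq_one_sub (measurable_prodMk_left (hS n))]
  · exact hpg n y

theorem isBMM_of_indicator (hY : Measurable Y)
    (hε : ∀ n, Measurable (ε n)) (hindep : iIndepFun (Fin.cons Y ε : Fin (N + 1) → Ω → β) P)
    {g : β → ℝ} (hg : Measurable g) {S : Fin N → Set (β × β)} (hS : ∀ n, MeasurableSet (S n))
    {D : Fin N → Ω → ℝ} (hD : ∀ n, D n = {ω | (Y ω, ε n ω) ∈ S n}.indicator 1)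
    {p : Fin N → ℝ → ℝ} (hp : ∀ n, Measurable (p n)) (hp01 : ∀ n z, p n z ∈ Icc (0 : ℝ) 1)
    (hpg : ∀ n y, p n (g y) = (P.map (ε n)).real (Prod.mk y ⁻¹' S n)) :
    IsBMM P D (fun ω => g (Y ω)) (fun n => (P {ω | D n ω = 1}).toReal) p := by
  have := hindep.isProbabilityMeasure
  have hevent : ∀ n (b : Bool), {ω | D n ω = if b then 1 else 0}
      = {ω | (Y ω, ε n ω) ∈ if b then S n else (S n)ᶜ} := by
    intro n b
    ext ω
    cases b <;> by_cases h : (Y ω, ε n ω) ∈ S n <;> simp [hD, h]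
  refine ⟨fun n => ?_, hg.comp hY, hp, fun n ω => ?_,
    fun n => ⟨measureReal_nonneg, measureReal_le_one⟩,
    fun n => (ENNReal.ofReal_toReal (measure_ne_top P _)).symm, hp01, fun n B hB => ?_,
    fun d B hB => ?_⟩
  · rw [hD]
    exact measurable_const.indicator ((hY.prodMk (hε n)) (hS n))
  · rw [hD]
    exact indicator_eq_zero_or_self _ _ ω
  · rw [show {ω | D n ω = 1} = {ω | (Y ω, ε n ω) ∈ S n} by simpa using hevent n true]
    exact measure_mem_inter_preimage_eq_ofReal_setIntegral hY hε hindep hg hS hp hp01 hpg n hB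
  · rw [iInter_congr fun n => hevent n (d n)]
    exact measure_iInter_mem_ite_inter_preimage_eq_ofReal_setIntegral hY hε hindep hg hS hp hp01
      hpg d hB

end ThresholdModel

theorem stmt1_general {Ω : Type*} [MeasurableSpace Ω] (P : MeasureTheory.Measure Ω)
    [MeasureTheory.IsProbabilityMeasure P] {N : ℕ}
    (Y : Ω → ℝ) (ε : Fin N → Ω → ℝ) (hY : Measurable Y) (hε : ∀ n, Measurable (ε n))
    (hindep : ProbabilityTheory.iIndepFun
      (Fin.cons Y ε : Fin (N + 1) → Ω → ℝ) P)
    (f : Fin N → ℝ × ℝ → ℝ) (hfmeas : ∀ n, Measurable (f n))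
    (hfmono : ∀ n t, Monotone fun y => f n (y, t))
    (X : Fin N → Ω → ℝ) (hX : ∀ n ω, X n ω = f n (Y ω, ε n ω))
    (c : Fin N → ℝ)
    (D : Fin N → Ω → ℝ) (hD : ∀ n ω, D n ω = if X n ω ≤ c n then 1 else 0)
    (g : ℝ → ℝ) (hg : StrictAnti g)
    (Z : Ω → ℝ) (hZ : ∀ ω, Z ω = g (Y ω)) :
    ∃ p : Fin N → ℝ → ℝ,
      IsSIBMM P D Z (fun n => (P {ω | D n ω = 1}).toReal) p := by
  obtain rfl : Z = fun ω => g (Y ω) := funext hZ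
  set S : Fin N → Set (ℝ × ℝ) := fun n => {x | f n x ≤ c n}
  have hS : ∀ n, MeasurableSet (S n) := fun n => measurableSet_le (hfmeas n) measurable_const
  have : ∀ n, IsProbabilityMeasure (P.map (ε n)) := fun n =>
    Measure.isProbabilityMeasure_map (hε n).aemeasurable
  have hanti : ∀ n, Antitone fun y => (P.map (ε n)).real (Prod.mk y ⁻¹' S n) :=
    fun n y y' hyy' => measureReal_mono fun t ht => (hfmono n t hyy').trans ht
  choose p hp_mono hp01 hpg using fun n => exists_monotone_comp_eq_of_strictAnti hg (hanti n)
    fun y => ⟨measureReal_nonneg, measureReal_le_one⟩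
  refine ⟨p, isBMM_of_indicator hY hε hindep hg.antitone.measurable hS (fun n => ?_)
    (fun n => (hp_mono n).measurable) hp01 hpg, hp_mono⟩
  ext ω
  simp [hD, hX, S, indicator_apply]

/-- Lemma: construction of siBMMs through threshold models.
With `Xₙ = fₙ(Y, εₙ)`, `fₙ` increasing in its first argument, `Dₙ = 1_{Xₙ ≤ cₙ}` and
`Z = g(Y)` for strictly decreasing `g`, the `Dₙ` are conditionally independent given `Z`
and the conditional default probabilities admit increasing versions; i.e. `(D, Z)` is an
siBMM with default probabilities `πₙ = P(Dₙ = 1)`. -/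
theorem stmt1 {Ω : Type*} [MeasurableSpace Ω] (P : MeasureTheory.Measure Ω)
    [MeasureTheory.IsProbabilityMeasure P] (hP : MeasureAtomless P) {N : ℕ}
    (Y : Ω → ℝ) (ε : Fin N → Ω → ℝ) (hY : Measurable Y) (hε : ∀ n, Measurable (ε n))
    (hindep : ProbabilityTheory.iIndepFun
      (Fin.cons Y ε : Fin (N + 1) → Ω → ℝ) P)
    (f : Fin N → ℝ × ℝ → ℝ) (hfmeas : ∀ n, Measurable (f n))
    (hfmono : ∀ n t, Monotone fun y => f n (y, t))
    (X : Fin N → Ω → ℝ) (hX : ∀ n ω, X n ω = f n (Y ω, ε n ω))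
    (c : Fin N → ℝ)
    (D : Fin N → Ω → ℝ) (hD : ∀ n ω, D n ω = if X n ω ≤ c n then 1 else 0)
    (g : ℝ → ℝ) (hg : StrictAnti g)
    (Z : Ω → ℝ) (hZ : ∀ ω, Z ω = g (Y ω)) :
    ∃ p : Fin N → ℝ → ℝ,
      IsSIBMM P D Z (fun n => (P {ω | D n ω = 1}).toReal) p :=
  stmt1_general P Y ε hY hε hindep f hfmeas hfmono X hX c D hD g hg Z hZ
end
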